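/- Run the discounted OCP algorithm A_CP with hyperparameter ε > 0, discount factors λ_t ∈ (0,∞) (λ_0 := 1): S*_{0,clip} = V*_{0,clip} = G*_0 = 0; predict r_t = max(r̃_t, 0), where r̃_t = 0 if G*_{t-1} = 0, otherwise r̃_t is given by the erfi-based FTRL formula of the algorithm (so in particular r̃_t ≤ 0, hence r_t = 0, whenever S*_{t-1,clip} ≤ 0); receive g*_t ∈ ∂f*_t(r_t) with f*_t convex on [0,∞) minimized at r*_t ∈ [0,∞) and g*_t ≤ 0 whenever r_t = r*_t (so g*_t ≤ 0 whenever r_t = 0); update g*_{t,clip} = projection of g*_t onto [−λ_{t-1}·G*_{t-1}, λ_{t-1}·G*_{t-1}], S*_{t,clip} = λ_{t-1}·S*_{t-1,clip} − g*_{t,clip}, G*_t = max(λ_{t-1}·G*_{t-1}, |g*_t|). Then for all t ∈ ℕ_+: S*_{t,clip} ≥ −G*_t. -/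
import Mathlib


open scoped BigOperators

/-- The (rescaled) imaginary error function `erfi(x) = ∫₀ˣ exp(u²) du`. -/
noncomputable def erfi (x : ℝ) : ℝ := ∫ u in (0:ℝ)..x, Real.exp (u^2)

lemma erfi_nonpos {x : ℝ} (hx : x ≤ 0) : erfi x ≤ 0 := by
  unfold erfi
  rw [intervalIntegral.integral_symm x 0]
  have : (0:ℝ) ≤ ∫ u in x..(0:ℝ), Real.exp (u^2) :=
    intervalIntegral.integral_nonneg hx (fun u _ => (Real.exp_pos _).le)
  linarith

/-- For the discounted OCP algorithm `A_CP`, the discounted clipped gradient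
sum is bounded below: `S*_{t,clip} ≥ −G*_t` for all `t ≥ 1`. -/
theorem ocp_clipped_sum_lower_bound
    (eps : ℝ) (heps : 0 < eps)
    (lam : ℕ → ℝ) (hlam : ∀ t, 0 < lam t) (hlam0 : lam 0 = 1)
    (f : ℕ → ℝ → ℝ) (rstar : ℕ → ℝ)
    (Sc Vc Gs rt r gs gclip : ℕ → ℝ)
    (hSc0 : Sc 0 = 0) (hVc0 : Vc 0 = 0) (hGs0 : Gs 0 = 0)
    (hrt : ∀ t, 1 ≤ t →
      (Gs (t-1) = 0 → rt t = 0) ∧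
      (Gs (t-1) ≠ 0 → rt t =
        eps * erfi (Sc (t-1) /
          (2 * Real.sqrt (Vc (t-1) + 2 * Gs (t-1) * Sc (t-1) + 16 * (Gs (t-1))^2)))
        - eps * Gs (t-1) / Real.sqrt (Vc (t-1) + 2 * Gs (t-1) * Sc (t-1) + 16 * (Gs (t-1))^2)
          * Real.exp ((Sc (t-1))^2 /
            (4 * (Vc (t-1) + 2 * Gs (t-1) * Sc (t-1) + 16 * (Gs (t-1))^2)))))
    (hr : ∀ t, 1 ≤ t → r t = max (rt t) 0)
    (hfconv : ∀ t, ConvexOn ℝ (Set.Ici 0) (f t))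
    (hrstar : ∀ t, 0 ≤ rstar t)
    (hmin : ∀ t, ∀ y ∈ Set.Ici (0:ℝ), f t (rstar t) ≤ f t y)
    (hsub : ∀ t, 1 ≤ t → ∀ y ∈ Set.Ici (0:ℝ), f t (r t) + gs t * (y - r t) ≤ f t y)
    (hneg : ∀ t, 1 ≤ t → r t = rstar t → gs t ≤ 0)
    (hclip : ∀ t, 1 ≤ t →
      gclip t = max (-(lam (t-1) * Gs (t-1))) (min (gs t) (lam (t-1) * Gs (t-1))))
    (hScrec : ∀ t, 1 ≤ t → Sc t = lam (t-1) * Sc (t-1) - gclip t)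
    (hVcrec : ∀ t, 1 ≤ t → Vc t = (lam (t-1))^2 * Vc (t-1) + (gclip t)^2)
    (hGsrec : ∀ t, 1 ≤ t → Gs t = max (lam (t-1) * Gs (t-1)) |gs t|) :
    ∀ t, 1 ≤ t →
      -Gs t ≤ Sc t := by
  -- Gs is nonnegative
  have hGnn : ∀ t, 0 ≤ Gs t := by
    intro t
    cases t with
    | zero => rw [hGs0]
    | succ n =>
      rw [hGsrec (n+1) (by omega)]
      exact le_trans (abs_nonneg _) (le_max_right _ _)
  -- Vc is nonnegative
  have hVnn : ∀ t, 0 ≤ Vc t := by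
    intro t
    induction t with
    | zero => rw [hVc0]
    | succ n ih =>
      rw [hVcrec (n+1) (by omega)]
      simp only [Nat.add_sub_cancel]
      positivity
  -- if r t = 0 then gs t ≤ 0
  have hg0 : ∀ t, 1 ≤ t → r t = 0 → gs t ≤ 0 := by
    intro t ht hr0
    by_contra hpos
    push_neg at hpos
    have h1 := hsub t ht (rstar t) (hrstar t)
    have h2 := hmin t 0 (Set.mem_Ici.mpr le_rfl)
    rw [hr0] at h1
    -- f t 0 + gs t * rstar t ≤ f t (rstar t) ≤ f t 0
    have : gs t * rstar t ≤ 0 := by linarith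
    have hrs0 : rstar t = 0 := le_antisymm (nonpos_of_mul_nonpos_right (by linarith [mul_comm (gs t) (rstar t)]) hpos) (hrstar t)
    have := hneg t ht (by rw [hr0, hrs0])
    linarith
  intro t ht
  induction t, ht using Nat.le_induction with
  | base =>
    have hS1 : Sc 1 = lam 0 * Sc 0 - gclip 1 := hScrec 1 le_rfl
    have hc1 : gclip 1 = max (-(lam 0 * Gs 0)) (min (gs 1) (lam 0 * Gs 0)) := hclip 1 le_rfl
    rw [hGs0, hlam0] at hc1
    simp only [mul_zero, neg_zero] at hc1
    have : gclip 1 = 0 := by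
      rw [hc1]
      rcases le_or_gt (gs 1) 0 with h | h
      · simp [min_eq_left h, max_eq_left h]
      · simp [min_eq_right h.le]
    rw [hS1, hSc0, this, mul_zero, sub_zero]
    linarith [hGnn 1]
  | succ n hn ih =>
    have hn1 : 1 ≤ n + 1 := by omega
    have hd : n + 1 - 1 = n := rfl
    have hS : Sc (n+1) = lam n * Sc n - gclip (n+1) := by
      have := hScrec (n+1) hn1; rwa [hd] at this
    have hG : Gs (n+1) = max (lam n * Gs n) |gs (n+1)| := by
      have := hGsrec (n+1) hn1; rwa [hd] at this
    have hc : gclip (n+1) = max (-(lam n * Gs n)) (min (gs (n+1)) (lam n * Gs n)) := by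
      have := hclip (n+1) hn1; rwa [hd] at this
    have hlGnn : 0 ≤ lam n * Gs n := mul_nonneg (hlam n).le (hGnn n)
    have hGle : lam n * Gs n ≤ Gs (n+1) := by rw [hG]; exact le_max_left _ _
    rcases le_or_gt 0 (Sc n) with hSn | hSn
    · -- Sc n ≥ 0
      have hcle : gclip (n+1) ≤ lam n * Gs n := by
        rw [hc]
        exact max_le (by linarith) (min_le_right _ _)
      have : 0 ≤ lam n * Sc n := mul_nonneg (hlam n).le hSn
      rw [hS]; linarith
    · -- Sc n < 0 : show r (n+1) = 0 hence gs (n+1) ≤ 0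
      have hrt1 := hrt (n+1) hn1
      rw [hd] at hrt1
      have hrtle : rt (n+1) ≤ 0 := by
        rcases eq_or_ne (Gs n) 0 with hGz | hGz
        · rw [hrt1.1 hGz]
        · have hGpos : 0 < Gs n := lt_of_le_of_ne (hGnn n) (Ne.symm hGz)
          set D := Vc n + 2 * Gs n * Sc n + 16 * (Gs n)^2 with hD
          have hDpos : 0 < D := by
            have h1 : -(Gs n) ≤ Sc n := ih
            nlinarith [hVnn n]
          have hsqrt : 0 < Real.sqrt D := Real.sqrt_pos.mpr hDpos
          rw [hrt1.2 hGz]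
          have ht1 : eps * erfi (Sc n / (2 * Real.sqrt D)) ≤ 0 := by
            have harg : Sc n / (2 * Real.sqrt D) ≤ 0 :=
              div_nonpos_of_nonpos_of_nonneg hSn.le (by positivity)
            exact mul_nonpos_of_nonneg_of_nonpos heps.le (erfi_nonpos harg)
          have ht2 : 0 < eps * Gs n / Real.sqrt D * Real.exp ((Sc n)^2 / (4 * D)) := by
            positivity
          linarith
      have hr0 : r (n+1) = 0 := by
        rw [hr (n+1) hn1, max_eq_right hrtle]
      have hgs : gs (n+1) ≤ 0 := hg0 (n+1) hn1 hr0
      have hcle : gclip (n+1) ≤ 0 := by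
        rw [hc]
        exact max_le (by linarith) (le_trans (min_le_left _ _) hgs)
      have h1 : -(Gs n) ≤ Sc n := ih
      have h2 : -(lam n * Gs n) ≤ lam n * Sc n := by
        rw [← mul_neg]
        exact mul_le_mul_of_nonneg_left h1 (hlam n).le
      rw [hS]; linarith
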